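/- arXiv:1803.05093 — 2 statements merged into one kernel-verified Lean document; each statement's English description precedes it below -/
import Mathlib

section
/- Under the noise model, every negative edge e of G satisfies pers(e) ≤ ν; equivalently, every paired vertex of G has persistence at most ν. In particular, for any δ with ν ≤ δ, every vertex–edge persistence pair has persistence at most δ. -/
open SimpleGraph

/-- The function value of an edge: the larger of the values of its two endpoints. -/
noncomputable def fbar {V : Type*} (f : V → ℝ) : Sym2 V → ℝ :=
  Sym2.lift ⟨fun u w => max (f u) (f w), fun u w => max_comm (f u) (f w)⟩

/-- The spanning subgraph `G_{≺e}` of `G` whose edges are exactly the edges `e'` of `G`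
with `e' ≺ e`. -/
def Gbelow {V : Type*} (G : SimpleGraph V) (lt : Sym2 V → Sym2 V → Prop) (e : Sym2 V) :
    SimpleGraph V :=
  SimpleGraph.fromEdgeSet {e' | e' ∈ G.edgeSet ∧ lt e' e}

/-- An edge `e` of `G` is negative if its two endpoints lie in different connected
components of `G_{≺e}`. -/
def IsNegEdge {V : Type*} (G : SimpleGraph V) (lt : Sym2 V → Sym2 V → Prop) (e : Sym2 V) :
    Prop :=
  e ∈ G.edgeSet ∧ ∃ u w : V, e = s(u, w) ∧ ¬ (Gbelow G lt e).Reachable u w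

/-- An edge `e` of `G` is positive if it is not negative. -/
def IsPosEdge {V : Type*} (G : SimpleGraph V) (lt : Sym2 V → Sym2 V → Prop) (e : Sym2 V) :
    Prop :=
  e ∈ G.edgeSet ∧ ¬ IsNegEdge G lt e

/-- The `f`-minimizing vertex of the connected component of `u` in the graph `H`. -/
noncomputable def compMin {V : Type*} [Fintype V] (f : V → ℝ) (H : SimpleGraph V) (u : V) :
    V := by
  classical
  exact Classical.choose (Finset.exists_min_image
    (Finset.univ.filter fun v => H.Reachable u v) f
    ⟨u, Finset.mem_filter.mpr ⟨Finset.mem_univ u, SimpleGraph.Reachable.refl u⟩⟩)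

/-- The vertex `m(e)` paired with a negative edge `e` by the elder rule: of the two
`f`-minimizing vertices of the components (in `G_{≺e}`) of the endpoints of `e`, the one
with the larger `f`-value. -/
noncomputable def pairVert {V : Type*} [Fintype V] (G : SimpleGraph V) (f : V → ℝ)
    (hf : Function.Injective f) (lt : Sym2 V → Sym2 V → Prop) (e : Sym2 V) : V :=
  Sym2.lift ⟨fun u w =>
      if f (compMin f (Gbelow G lt e) u) < f (compMin f (Gbelow G lt e) w)
      then compMin f (Gbelow G lt e) w
      else compMin f (Gbelow G lt e) u, by
    intro u w
    dsimp only
    rcases lt_trichotomy (f (compMin f (Gbelow G lt e) u)) (f (compMin f (Gbelow G lt e) w))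
      with h | h | h
    · rw [if_pos h, if_neg (lt_asymm h)]
    · rw [hf h]
    · rw [if_neg (lt_asymm h), if_pos h]⟩ e

/-- The persistence of a negative edge `e`: `f̄(e) - f(m(e))`. -/
noncomputable def persE {V : Type*} [Fintype V] (G : SimpleGraph V) (f : V → ℝ)
    (hf : Function.Injective f) (lt : Sym2 V → Sym2 V → Prop) (e : Sym2 V) : ℝ :=
  fbar f e - f (pairVert G f hf lt e)


/-!
Put `H = G_{≺e}` for a negative edge `e = uw`, and let `m_u`, `m_w` be the minima of the
components of `u` and `w` in `H`; then `pers(e) = f̄(e) - max (f m_u) (f m_w)`, and `f ≤ 0`.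
If one of `m_u`, `m_w` lies outside `S`, its value is at least `-ν`, so `pers(e) ≤ ν`.
Otherwise both components of `H` meet `S`. Were `f̄(e) > -β`, every edge of `G[S]` would
precede `e`, so `S` would lie in a single component of `H`, joining `u` to `w`; hence
`f̄(e) ≤ -β`, while `f m_u ≥ -β - ν`.
-/

section ElderRule

variable {V : Type*}

theorem fbar_mk (f : V → ℝ) (u w : V) : fbar f s(u, w) = max (f u) (f w) := rfl

theorem Gbelow_adj_of_fbar_lt {G : SimpleGraph V} {f : V → ℝ} {lt : Sym2 V → Sym2 V → Prop}
    (hlt_refine : ∀ e₁ ∈ G.edgeSet, ∀ e₂ ∈ G.edgeSet, fbar f e₁ < fbar f e₂ → lt e₁ e₂)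
    {e : Sym2 V} (he : e ∈ G.edgeSet) {a b : V} (hab : G.Adj a b)
    (hfab : fbar f s(a, b) < fbar f e) : (Gbelow G lt e).Adj a b := by
  rw [Gbelow, fromEdgeSet_adj]
  exact ⟨⟨hab, hlt_refine _ hab _ he hfab⟩, hab.ne⟩

/-- If every vertex of `S` lies below `f̄(e)`, then all edges of `G[S]` precede `e`. -/
theorem Gbelow_reachable_of_preconnected {G : SimpleGraph V} {f : V → ℝ}
    {lt : Sym2 V → Sym2 V → Prop}
    (hlt_refine : ∀ e₁ ∈ G.edgeSet, ∀ e₂ ∈ G.edgeSet, fbar f e₁ < fbar f e₂ → lt e₁ e₂)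
    {e : Sym2 V} (he : e ∈ G.edgeSet) {S : Set V} (hS : (G.induce S).Preconnected)
    (hSe : ∀ v ∈ S, f v < fbar f e) {a b : V} (ha : a ∈ S) (hb : b ∈ S) :
    (Gbelow G lt e).Reachable a b := by
  refine (hS ⟨a, ha⟩ ⟨b, hb⟩).map ⟨Subtype.val, fun {x y} hxy => ?_⟩
  exact Gbelow_adj_of_fbar_lt hlt_refine he hxy (max_lt (hSe x x.2) (hSe y y.2))

variable [Fintype V]

theorem compMin_reachable (f : V → ℝ) (H : SimpleGraph V) (u : V) :
    H.Reachable u (compMin f H u) := by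
  classical
  exact (Finset.mem_filter.mp (Classical.choose_spec (Finset.exists_min_image
    (Finset.univ.filter fun v => H.Reachable u v) f
    ⟨u, Finset.mem_filter.mpr ⟨Finset.mem_univ u, Reachable.refl u⟩⟩)).1).2

theorem compMin_not_mem_or_compMin_not_mem {f : V → ℝ} {H : SimpleGraph V} {u w : V}
    (huw : ¬ H.Reachable u w) {S : Set V} (hS : ∀ a ∈ S, ∀ b ∈ S, H.Reachable a b) :
    compMin f H u ∉ S ∨ compMin f H w ∉ S := by
  by_contra! h
  exact huw ((compMin_reachable f H u).trans
    ((hS _ h.1 _ h.2).trans (compMin_reachable f H w).symm))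

theorem apply_pairVert_mk (G : SimpleGraph V) (f : V → ℝ) (hf : Function.Injective f)
    (lt : Sym2 V → Sym2 V → Prop) (u w : V) :
    f (pairVert G f hf lt s(u, w)) =
      max (f (compMin f (Gbelow G lt s(u, w)) u)) (f (compMin f (Gbelow G lt s(u, w)) w)) := by
  change f (if _ < _ then _ else _) = _
  split_ifs with h
  · exact (max_eq_right h.le).symm
  · exact (max_eq_left (not_lt.mp h)).symm

theorem persE_mk (G : SimpleGraph V) (f : V → ℝ) (hf : Function.Injective f)
    (lt : Sym2 V → Sym2 V → Prop) (u w : V) :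
    persE G f hf lt s(u, w) = max (f u) (f w) -
      max (f (compMin f (Gbelow G lt s(u, w)) u)) (f (compMin f (Gbelow G lt s(u, w)) w)) := by
  rw [persE, apply_pairVert_mk G f hf lt, fbar_mk]

end ElderRule

theorem negative_edge_persistence_le_nu_general {V : Type*} [Fintype V]
    (G : SimpleGraph V) (f : V → ℝ) (hf : Function.Injective f)
    (lt : Sym2 V → Sym2 V → Prop)
    (hlt_refine : ∀ e₁ ∈ G.edgeSet, ∀ e₂ ∈ G.edgeSet, fbar f e₁ < fbar f e₂ → lt e₁ e₂)
    (S : Set V) (β ν : ℝ) (hβν : 2 * ν < β) (hν : 0 ≤ ν)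
    (hS : (G.induce S).Connected)
    (hfS : ∀ v ∈ S, f v ∈ Set.Icc (-β - ν) (-β))
    (hfSc : ∀ v : V, v ∉ S → f v ∈ Set.Icc (-ν) 0) :
    (∀ e : Sym2 V, IsNegEdge G lt e → persE G f hf lt e ≤ ν) ∧
    (∀ δ : ℝ, ν ≤ δ → ∀ e : Sym2 V, IsNegEdge G lt e → persE G f hf lt e ≤ δ) := by
  have hf_nonpos : ∀ v, f v ≤ 0 := fun v => by
    by_cases hv : v ∈ S
    · linarith [(hfS v hv).2]
    · exact (hfSc v hv).2
  have key : ∀ e : Sym2 V, IsNegEdge G lt e → persE G f hf lt e ≤ ν := by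
    rintro e ⟨he, u, w, rfl, huw⟩
    rw [persE_mk]
    set mu := compMin f (Gbelow G lt s(u, w)) u
    set mw := compMin f (Gbelow G lt s(u, w)) w
    have hmax_nonpos := max_le (hf_nonpos u) (hf_nonpos w)
    by_cases hmins : mu ∈ S ∧ mw ∈ S
    · have hfbar : max (f u) (f w) ≤ -β := by
        by_contra! hfbar
        have hSe : ∀ v ∈ S, f v < fbar f s(u, w) := fun v hv => (hfS v hv).2.trans_lt hfbar
        have hS_joined : ∀ a ∈ S, ∀ b ∈ S, (Gbelow G lt s(u, w)).Reachable a b :=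
          fun a ha b hb => Gbelow_reachable_of_preconnected hlt_refine he hS.preconnected hSe ha hb
        exact (compMin_not_mem_or_compMin_not_mem huw hS_joined).elim
          (· hmins.1) (· hmins.2)
      linarith [(hfS mu hmins.1).1, le_max_left (f mu) (f mw)]
    · rcases not_and_or.mp hmins with h | h
      · linarith [(hfSc mu h).1, le_max_left (f mu) (f mw)]
      · linarith [(hfSc mw h).1, le_max_right (f mu) (f mw)]
  exact ⟨key, fun δ hδ e he => (key e he).trans hδ⟩

/-- Under the noise model, every negative edge has persistence at most `ν`;
in particular, for any `δ ≥ ν`, every vertex–edge persistence pair has persistence at most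
`δ`. -/
theorem negative_edge_persistence_le_nu {V : Type*} [Fintype V]
    (G : SimpleGraph V) (f : V → ℝ) (hf : Function.Injective f)
    (lt : Sym2 V → Sym2 V → Prop)
    (hlt_irrefl : ∀ e ∈ G.edgeSet, ¬ lt e e)
    (hlt_trans : ∀ e₁ ∈ G.edgeSet, ∀ e₂ ∈ G.edgeSet, ∀ e₃ ∈ G.edgeSet,
      lt e₁ e₂ → lt e₂ e₃ → lt e₁ e₃)
    (hlt_total : ∀ e₁ ∈ G.edgeSet, ∀ e₂ ∈ G.edgeSet, e₁ ≠ e₂ → lt e₁ e₂ ∨ lt e₂ e₁)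
    (hlt_refine : ∀ e₁ ∈ G.edgeSet, ∀ e₂ ∈ G.edgeSet, fbar f e₁ < fbar f e₂ → lt e₁ e₂)
    (S : Set V) (β ν : ℝ) (hβν : 2 * ν < β) (hν : 0 ≤ ν)
    (hG : G.Connected) (hS : (G.induce S).Connected)
    (hfS : ∀ v ∈ S, f v ∈ Set.Icc (-β - ν) (-β))
    (hfSc : ∀ v : V, v ∉ S → f v ∈ Set.Icc (-ν) 0) :
    (∀ e : Sym2 V, IsNegEdge G lt e → persE G f hf lt e ≤ ν) ∧
    (∀ δ : ℝ, ν ≤ δ → ∀ e : Sym2 V, IsNegEdge G lt e → persE G f hf lt e ≤ δ) :=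
  negative_edge_persistence_le_nu_general G f hf lt hlt_refine S β ν hβν hν hS hfS hfSc
end

section
/- Under the noise model, the negative edges of G having both endpoints in S form a spanning tree of the induced subgraph G[S]: the spanning subgraph of G[S] with these edges contains no cycle and connects every pair of vertices of S. -/
open SimpleGraph

/-!
On a cycle of negative edges, the `≺`-largest edge `e` would have its endpoints joined by the
rest of the cycle inside `G_{≺e}`; so the negative edges form a forest. If a set `P` of edges
contains all `≺`-predecessors of its members, induction along `≺` shows that the negative
edges of `P` connect the endpoints of every edge of `P`: a positive edge is bypassed by a path
of earlier edges, which lie in `P` again. Under the noise model an edge inside `S` has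
`f̄ ≤ -β < -ν ≤ f̄` of any other edge, so the edges inside `S` form such a set, and the
connectivity of `G[S]` yields the spanning property.
-/

namespace SimpleGraph

variable {V W : Type*}

theorem Reachable.lift {G : SimpleGraph V} {H : SimpleGraph W} (f : V → W)
    (h : ∀ u w, G.Adj u w → H.Reachable (f u) (f w)) {a b : V} (hab : G.Reachable a b) :
    H.Reachable (f a) (f b) := by
  rw [reachable_iff_reflTransGen] at hab ⊢
  exact Relation.ReflTransGen.lift' f
    (fun u w huw => (reachable_iff_reflTransGen _ _).1 (h u w huw)) a b hab

theorem Walk.IsCycle.reachable_fromEdgeSet_edges_diff {G : SimpleGraph V} {x u w : V}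
    {c : G.Walk x x} (hc : c.IsCycle) (he : s(u, w) ∈ c.edges) :
    (fromEdgeSet ({d | d ∈ c.edges} \ {s(u, w)})).Reachable u w := by
  set K := fromEdgeSet {d | d ∈ c.edges}
  have hcK : ∀ d ∈ c.edges, d ∈ K.edgeSet := fun d hd => by
    rw [edgeSet_fromEdgeSet]
    exact ⟨hd, G.not_isDiag_of_mem_edgeSet (c.edges_subset_edgeSet hd)⟩
  have hK := (adj_and_reachable_delete_edges_iff_exists_cycle (G := K)).2
    ⟨x, c.transfer K hcK, hc.transfer hcK, by rwa [Walk.edges_transfer]⟩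
  rw [fromEdgeSet_sdiff]
  exact hK.2

end SimpleGraph

section Filtration

variable {V : Type*} {G : SimpleGraph V} {lt : Sym2 V → Sym2 V → Prop}

noncomputable def edgeRank (G : SimpleGraph V) (lt : Sym2 V → Sym2 V → Prop) (e : Sym2 V) : ℕ :=
  {e' | e' ∈ G.edgeSet ∧ lt e' e}.ncard

theorem edgeRank_lt_edgeRank [Finite V]
    (hlt_irrefl : ∀ e ∈ G.edgeSet, ¬ lt e e)
    (hlt_trans : ∀ e₁ ∈ G.edgeSet, ∀ e₂ ∈ G.edgeSet, ∀ e₃ ∈ G.edgeSet,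
      lt e₁ e₂ → lt e₂ e₃ → lt e₁ e₃)
    {a b : Sym2 V} (ha : a ∈ G.edgeSet) (hb : b ∈ G.edgeSet) (hab : lt a b) :
    edgeRank G lt a < edgeRank G lt b := by
  refine Set.ncard_lt_ncard ⟨fun x hx => ⟨hx.1, hlt_trans x hx.1 a ha b hb hx.2 hab⟩,
    fun hsub => hlt_irrefl a ha (hsub ⟨ha, hab⟩).2⟩ (Set.toFinite _)

theorem exists_greatest_of_subset_edgeSet [Finite V]
    (hlt_irrefl : ∀ e ∈ G.edgeSet, ¬ lt e e)
    (hlt_trans : ∀ e₁ ∈ G.edgeSet, ∀ e₂ ∈ G.edgeSet, ∀ e₃ ∈ G.edgeSet,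
      lt e₁ e₂ → lt e₂ e₃ → lt e₁ e₃)
    (hlt_total : ∀ e₁ ∈ G.edgeSet, ∀ e₂ ∈ G.edgeSet, e₁ ≠ e₂ → lt e₁ e₂ ∨ lt e₂ e₁)
    {s : Finset (Sym2 V)} (hs : s.Nonempty) (hsG : ∀ d ∈ s, d ∈ G.edgeSet) :
    ∃ e ∈ s, ∀ d ∈ s, d ≠ e → lt d e := by
  obtain ⟨e, he, hmax⟩ := s.exists_max_image (edgeRank G lt) hs
  refine ⟨e, he, fun d hd hde => ?_⟩
  refine (hlt_total d (hsG d hd) e (hsG e he) hde).resolve_right fun hed => ?_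
  exact (hmax d hd).not_gt (edgeRank_lt_edgeRank hlt_irrefl hlt_trans (hsG e he) (hsG d hd) hed)

theorem gbelow_adj {e : Sym2 V} {a b : V} :
    (Gbelow G lt e).Adj a b ↔ (s(a, b) ∈ G.edgeSet ∧ lt s(a, b) e) ∧ a ≠ b :=
  fromEdgeSet_adj _

theorem isAcyclic_negEdges [Finite V]
    (hlt_irrefl : ∀ e ∈ G.edgeSet, ¬ lt e e)
    (hlt_trans : ∀ e₁ ∈ G.edgeSet, ∀ e₂ ∈ G.edgeSet, ∀ e₃ ∈ G.edgeSet,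
      lt e₁ e₂ → lt e₂ e₃ → lt e₁ e₃)
    (hlt_total : ∀ e₁ ∈ G.edgeSet, ∀ e₂ ∈ G.edgeSet, e₁ ≠ e₂ → lt e₁ e₂ ∨ lt e₂ e₁) :
    (fromEdgeSet {e | IsNegEdge G lt e}).IsAcyclic := by
  classical
  intro x c hc
  have hcN : ∀ d ∈ c.edges.toFinset, IsNegEdge G lt d := fun d hd => by
    have hdN := c.edges_subset_edgeSet (List.mem_toFinset.1 hd)
    rw [edgeSet_fromEdgeSet] at hdN
    exact hdN.1
  have hcG : ∀ d ∈ c.edges.toFinset, d ∈ G.edgeSet := fun d hd => (hcN d hd).1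
  have hne : c.edges.toFinset.Nonempty := by
    simpa [List.toFinset_nonempty_iff, Walk.edges_eq_nil] using hc.not_nil
  obtain ⟨e, he, hmax⟩ := exists_greatest_of_subset_edgeSet hlt_irrefl hlt_trans hlt_total hne hcG
  obtain ⟨-, u, w, rfl, hnr⟩ := hcN e he
  refine hnr ((hc.reachable_fromEdgeSet_edges_diff (List.mem_toFinset.1 he)).mono ?_)
  intro a b hab
  rw [fromEdgeSet_adj] at hab
  obtain ⟨⟨had, hae⟩, hab⟩ := hab
  have had := List.mem_toFinset.2 had
  exact gbelow_adj.2 ⟨⟨hcG _ had, hmax _ had hae⟩, hab⟩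

def IsDownwardClosed (G : SimpleGraph V) (lt : Sym2 V → Sym2 V → Prop) (P : Set (Sym2 V)) :
    Prop :=
  ∀ e ∈ G.edgeSet, e ∈ P → ∀ e' ∈ G.edgeSet, lt e' e → e' ∈ P

theorem reachable_negEdges_of_isDownwardClosed [Finite V]
    (hlt_irrefl : ∀ e ∈ G.edgeSet, ¬ lt e e)
    (hlt_trans : ∀ e₁ ∈ G.edgeSet, ∀ e₂ ∈ G.edgeSet, ∀ e₃ ∈ G.edgeSet,
      lt e₁ e₂ → lt e₂ e₃ → lt e₁ e₃)
    {P : Set (Sym2 V)} (hP : IsDownwardClosed G lt P)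
    {u w : V} (he : s(u, w) ∈ G.edgeSet) (heP : s(u, w) ∈ P) :
    (fromEdgeSet {e | IsNegEdge G lt e ∧ e ∈ P}).Reachable u w := by
  induction hn : edgeRank G lt s(u, w) using Nat.strong_induction_on generalizing u w with
  | _ n ih =>
  by_cases hneg : IsNegEdge G lt s(u, w)
  · refine Adj.reachable ?_
    rw [fromEdgeSet_adj]
    exact ⟨⟨hneg, heP⟩, G.ne_of_adj he⟩
  · have hbelow : (Gbelow G lt s(u, w)).Reachable u w := by
      by_contra h
      exact hneg ⟨he, u, w, rfl, h⟩
    refine hbelow.lift id fun x y hxy => ?_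
    obtain ⟨⟨hxyG, hxy⟩, -⟩ := gbelow_adj.1 hxy
    exact ih _ (hn ▸ edgeRank_lt_edgeRank hlt_irrefl hlt_trans hxyG he hxy) hxyG
      (hP _ he heP _ hxyG hxy) rfl

end Filtration

section Sublevel

variable {V : Type*} {f : V → ℝ} {c : ℝ}

theorem fbar_lt_of_forall_mem {e : Sym2 V} (h : ∀ v ∈ e, f v < c) : fbar f e < c := by
  induction e using Sym2.ind with
  | _ a b => exact max_lt (h a (Sym2.mem_mk_left a b)) (h b (Sym2.mem_mk_right a b))

theorem le_fbar_of_mem {e : Sym2 V} {v : V} (hv : v ∈ e) : f v ≤ fbar f e := by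
  induction e using Sym2.ind with
  | _ a b =>
    rcases Sym2.mem_iff.1 hv with rfl | rfl
    · exact le_max_left _ _
    · exact le_max_right _ _

theorem isDownwardClosed_of_sublevel {G : SimpleGraph V} {lt : Sym2 V → Sym2 V → Prop}
    (hlt_irrefl : ∀ e ∈ G.edgeSet, ¬ lt e e)
    (hlt_trans : ∀ e₁ ∈ G.edgeSet, ∀ e₂ ∈ G.edgeSet, ∀ e₃ ∈ G.edgeSet,
      lt e₁ e₂ → lt e₂ e₃ → lt e₁ e₃)
    (hlt_refine : ∀ e₁ ∈ G.edgeSet, ∀ e₂ ∈ G.edgeSet, fbar f e₁ < fbar f e₂ → lt e₁ e₂)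
    {S : Set V} (hS : ∀ v ∈ S, f v < c) (hSc : ∀ v ∉ S, c ≤ f v) :
    IsDownwardClosed G lt {e | ∀ v ∈ e, v ∈ S} := by
  intro e he heS e' he' hlt v hv
  by_contra hvS
  have hee' : fbar f e < fbar f e' :=
    (fbar_lt_of_forall_mem fun x hx => hS x (heS x hx)).trans_le
      ((hSc v hvS).trans (le_fbar_of_mem hv))
  exact hlt_irrefl e' he' (hlt_trans e' he' e he e' he' hlt (hlt_refine e he e' he' hee'))

end Sublevel

theorem negative_edges_in_S_spanning_tree_general {V : Type*} [Fintype V]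
    (G : SimpleGraph V) (f : V → ℝ)
    (lt : Sym2 V → Sym2 V → Prop)
    (hlt_irrefl : ∀ e ∈ G.edgeSet, ¬ lt e e)
    (hlt_trans : ∀ e₁ ∈ G.edgeSet, ∀ e₂ ∈ G.edgeSet, ∀ e₃ ∈ G.edgeSet,
      lt e₁ e₂ → lt e₂ e₃ → lt e₁ e₃)
    (hlt_total : ∀ e₁ ∈ G.edgeSet, ∀ e₂ ∈ G.edgeSet, e₁ ≠ e₂ → lt e₁ e₂ ∨ lt e₂ e₁)
    (hlt_refine : ∀ e₁ ∈ G.edgeSet, ∀ e₂ ∈ G.edgeSet, fbar f e₁ < fbar f e₂ → lt e₁ e₂)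
    (S : Set V) (β ν : ℝ) (hβν : 2 * ν < β) (hν : 0 ≤ ν)
    (hS : (G.induce S).Connected)
    (hfS : ∀ v ∈ S, f v ∈ Set.Icc (-β - ν) (-β))
    (hfSc : ∀ v : V, v ∉ S → f v ∈ Set.Icc (-ν) 0) :
    (SimpleGraph.fromEdgeSet
      {e | IsNegEdge G lt e ∧ ∀ v ∈ e, v ∈ S}).IsAcyclic ∧
    (∀ u ∈ S, ∀ w ∈ S,
      (SimpleGraph.fromEdgeSet
        {e | IsNegEdge G lt e ∧ ∀ v ∈ e, v ∈ S}).Reachable u w) := by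
  have hdown : IsDownwardClosed G lt {e | ∀ v ∈ e, v ∈ S} :=
    isDownwardClosed_of_sublevel (c := -ν) hlt_irrefl hlt_trans hlt_refine
      (fun v hv => by linarith [(hfS v hv).2]) (fun v hv => (hfSc v hv).1)
  refine ⟨(isAcyclic_negEdges hlt_irrefl hlt_trans hlt_total).anti
    (fromEdgeSet_mono fun e he => he.1), fun u hu w hw => ?_⟩
  exact (hS.preconnected ⟨u, hu⟩ ⟨w, hw⟩).lift Subtype.val fun (x y : S) hxy =>
    reachable_negEdges_of_isDownwardClosed hlt_irrefl hlt_trans hdown hxy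
      (Sym2.forall_mem_pair.2 ⟨x.2, y.2⟩)

/-- Under the noise model, the negative edges with both endpoints in `S`
form a spanning tree of the induced subgraph `G[S]`: the spanning subgraph with these edges
contains no cycle and connects every pair of vertices of `S`. -/
theorem negative_edges_in_S_spanning_tree {V : Type*} [Fintype V]
    (G : SimpleGraph V) (f : V → ℝ) (hf : Function.Injective f)
    (lt : Sym2 V → Sym2 V → Prop)
    (hlt_irrefl : ∀ e ∈ G.edgeSet, ¬ lt e e)
    (hlt_trans : ∀ e₁ ∈ G.edgeSet, ∀ e₂ ∈ G.edgeSet, ∀ e₃ ∈ G.edgeSet,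
      lt e₁ e₂ → lt e₂ e₃ → lt e₁ e₃)
    (hlt_total : ∀ e₁ ∈ G.edgeSet, ∀ e₂ ∈ G.edgeSet, e₁ ≠ e₂ → lt e₁ e₂ ∨ lt e₂ e₁)
    (hlt_refine : ∀ e₁ ∈ G.edgeSet, ∀ e₂ ∈ G.edgeSet, fbar f e₁ < fbar f e₂ → lt e₁ e₂)
    (S : Set V) (β ν : ℝ) (hβν : 2 * ν < β) (hν : 0 ≤ ν)
    (hG : G.Connected) (hS : (G.induce S).Connected)
    (hfS : ∀ v ∈ S, f v ∈ Set.Icc (-β - ν) (-β))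
    (hfSc : ∀ v : V, v ∉ S → f v ∈ Set.Icc (-ν) 0) :
    (SimpleGraph.fromEdgeSet
      {e | IsNegEdge G lt e ∧ ∀ v ∈ e, v ∈ S}).IsAcyclic ∧
    (∀ u ∈ S, ∀ w ∈ S,
      (SimpleGraph.fromEdgeSet
        {e | IsNegEdge G lt e ∧ ∀ v ∈ e, v ∈ S}).Reachable u w) :=
  negative_edges_in_S_spanning_tree_general G f lt hlt_irrefl hlt_trans hlt_total hlt_refine S β ν
    hβν hν hS hfS hfSc
end
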